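/- For coprime positive integers p and q, the Dedekind sums satisfy the reciprocity law s(p,q) + s(q,p) = (p² + q² + 1)/(12pq) - 1/4, where s(p,q) = (1/(4q)) ∑_{j=1}^{q-1} cot(πj/q) cot(πpj/q). -/

import Mathlib

/-!
Summing `cot x cot y - cot (x + y) (cot x + cot y) = 1` over `x = π j / q`, `y = π k / p`
(`0 < j < q`, `0 < k < p`) gives `(q - 1) (p - 1)`; coprimality keeps `x + y` off `π ℤ`.
The term `∑ cot x cot y` vanishes because `∑ j, cot (π j / q) = 0`, and the multiplication
formula `∑_{k < p} cot (x + π k / p) = p cot (p x)` turns `∑ cot (x + y) cot x` into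
`4 p q s(p, q) - ∑ j, cot² (π j / q)`, and symmetrically. The same identity summed over all
pairs of residues mod `q` gives `3 ∑ j, cot² (π j / q) = (q - 1) (q - 2)`.
-/

open Real Finset

/-- Dedekind sum `s(p,q) = (1/(4q)) ∑_{j=1}^{q-1} cot(πj/q) cot(πpj/q)`. -/
noncomputable def dedekindSum (p q : ℕ) : ℝ :=
  (1 / (4 * (q : ℝ))) *
    ∑ j ∈ Finset.Ico 1 q, Real.cot (π * j / q) * Real.cot (π * p * j / q)

namespace Real

theorem cot_periodic : Function.Periodic cot π := fun x => by
  simp only [cot_eq_cos_div_sin, cos_add_pi, sin_add_pi, neg_div_neg_eq]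

theorem cot_pi_sub (x : ℝ) : cot (π - x) = -cot x := by
  simp only [cot_eq_cos_div_sin, cos_pi_sub, sin_pi_sub, neg_div]

theorem cot_mul_cot_sub_cot_add_mul {x y : ℝ} (hx : sin x ≠ 0) (hy : sin y ≠ 0)
    (hxy : sin (x + y) ≠ 0) : cot x * cot y - cot (x + y) * (cot x + cot y) = 1 := by
  simp only [cot_eq_cos_div_sin]
  field_simp
  rw [sin_add, cos_add]
  ring

theorem cot_pi_mul_natCast_mod (n q : ℕ) : cot (π * ↑(n % q) / q) = cot (π * n / q) := by
  rcases Nat.eq_zero_or_pos q with rfl | hq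
  · simp
  have hq' : (q : ℝ) ≠ 0 := by positivity
  conv_rhs => rw [← Nat.mod_add_div n q]
  rw [show π * ↑(n % q + q * (n / q)) / q = π * ↑(n % q) / q + ↑(n / q) * π by
    push_cast; field_simp]
  exact (cot_periodic.nat_mul _ _).symm

theorem sin_pi_mul_div_ne_zero {n q : ℕ} (hq : 0 < q) (h : ¬q ∣ n) :
    sin (π * n / q) ≠ 0 := by
  rw [Ne, sin_eq_zero_iff]
  rintro ⟨m, hm⟩
  have hq' : (q : ℝ) ≠ 0 := by positivity
  have : ((m * q : ℤ) : ℝ) = (n : ℤ) := by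
    push_cast
    field_simp at hm
    linear_combination hm
  exact h (Int.natCast_dvd_natCast.mp ⟨m, by rw [mul_comm]; exact_mod_cast this.symm⟩)

theorem sin_pi_mul_div_ne_zero_of_mem_Ico {j q : ℕ} (hj : j ∈ Ico 1 q) :
    sin (π * j / q) ≠ 0 := by
  obtain ⟨hj1, hjq⟩ := mem_Ico.mp hj
  exact sin_pi_mul_div_ne_zero (by omega) (Nat.not_dvd_of_pos_of_lt hj1 hjq)

theorem sin_pi_mul_div_add_ne_zero {p q j k : ℕ} (hpq : p.Coprime q) (hj : j ∈ Ico 1 q)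
    (hk : k ∈ Ico 1 p) : sin (π * j / q + π * k / p) ≠ 0 := by
  obtain ⟨hj1, hjq⟩ := mem_Ico.mp hj
  obtain ⟨hk1, hkp⟩ := mem_Ico.mp hk
  have hp : 0 < p := by omega
  have hq : 0 < q := by omega
  rw [show π * j / q + π * k / p = π * ↑(j * p + k * q) / ↑(p * q) by push_cast; field_simp]
  refine sin_pi_mul_div_ne_zero (Nat.mul_pos hp hq) fun h => Nat.not_dvd_of_pos_of_lt hj1 hjq ?_
  have : q ∣ j * p := (Nat.dvd_add_left (dvd_mul_left q k)).mp ((dvd_mul_left q p).trans h)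
  exact hpq.symm.dvd_of_dvd_mul_right this

end Real

section CotAdditionLaw

variable {G K : Type*} [AddCommGroup G] [Fintype G] [Field K] [CharZero K] {c : G → K}

theorem Fintype.sum_eq_zero_of_odd (hodd : ∀ x, c (-x) = -c x) : ∑ x, c x = 0 := by
  have h : ∑ x, c (-x) = ∑ x, c x := Fintype.sum_equiv (Equiv.neg G) _ _ fun _ => rfl
  simp only [hodd, sum_neg_distrib] at h
  exact self_eq_neg.mp h.symm

theorem three_mul_sum_sq_of_cot_addition [DecidableEq G] (hodd : ∀ x, c (-x) = -c x)
    (hadd : ∀ x y, x ≠ 0 → y ≠ 0 → x + y ≠ 0 →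
      c x * c y - c (x + y) * (c x + c y) = 1) :
    3 * ∑ x, c x ^ 2 = (Fintype.card G - 1) * (Fintype.card G - 2) := by
  have hsum : ∑ x, c x = 0 := Fintype.sum_eq_zero_of_odd hodd
  have hc0 : c 0 = 0 := self_eq_neg.mp (by simpa using hodd 0)
  have hshiftL (x : G) : ∑ y, c (x + y) = 0 :=
    (Fintype.sum_equiv (Equiv.addLeft x) _ _ fun _ => rfl).trans hsum
  have hshiftR (y : G) : ∑ x, c (x + y) = 0 :=
    (Fintype.sum_equiv (Equiv.addRight y) _ _ fun _ => rfl).trans hsum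
  have htotal : ∑ x, ∑ y, (c x * c y - c (x + y) * (c x + c y)) = 0 := by
    have hleft : ∑ x, ∑ y, c (x + y) * c x = 0 := by
      simp only [← sum_mul, hshiftL, zero_mul, sum_const_zero]
    have hright : ∑ x, ∑ y, c (x + y) * c y = 0 := by
      rw [sum_comm]
      simp only [← sum_mul, hshiftR, zero_mul, sum_const_zero]
    simp only [mul_add, sum_sub_distrib, sum_add_distrib, hleft, hright, ← sum_mul_sum, hsum]
    ring
  -- The summand is `1` off the three lines `x = 0`, `y = 0`, `x + y = 0`.
  have hpoint (x y : G) : c x * c y - c (x + y) * (c x + c y) =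
      1 - (if x = 0 then 1 + c y ^ 2 else 0) - (if y = 0 then 1 + c x ^ 2 else 0)
        - (if y = -x then 1 + c x ^ 2 else 0) + (if x = 0 then if y = 0 then 2 else 0 else 0) := by
    by_cases hx : x = 0
    · subst hx
      by_cases hy : y = 0 <;> simp [hy, hc0] <;> ring
    by_cases hy : y = 0
    · subst hy
      simp [hx, hc0]
      ring
    by_cases hxy : y = -x
    · subst hxy
      simp [hx, hodd, hc0]
      ring
    · simp only [hx, hy, hxy, if_false]
      rw [hadd x y hx hy fun h => hxy (eq_neg_of_add_eq_zero_right h)]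
      ring
  simp only [hpoint, sum_add_distrib, sum_sub_distrib, Fintype.sum_ite_eq', sum_ite_irrel,
    sum_const_zero, sum_const, card_univ, nsmul_eq_mul] at htotal
  linear_combination -htotal

end CotAdditionLaw

section Fin

variable {q : ℕ} [NeZero q]

theorem Fin.cot_pi_mul_neg (x : Fin q) :
    cot (π * ((-x : Fin q) : ℕ) / q) = -cot (π * (x : ℕ) / q) := by
  have hq : (q : ℝ) ≠ 0 := NeZero.ne _
  rw [Fin.val_neg', cot_pi_mul_natCast_mod, Nat.cast_sub x.is_lt.le,
    show π * (q - x : ℝ) / q = π - π * x / q by field_simp, cot_pi_sub]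

theorem Fin.cot_pi_mul_add (x y : Fin q) (hx : x ≠ 0) (hy : y ≠ 0) (hxy : x + y ≠ 0) :
    cot (π * (x : ℕ) / q) * cot (π * (y : ℕ) / q)
      - cot (π * ((x + y : Fin q) : ℕ) / q)
        * (cot (π * (x : ℕ) / q) + cot (π * (y : ℕ) / q))
      = 1 := by
  have hmem {z : Fin q} (hz : z ≠ 0) : (z : ℕ) ∈ Ico 1 q :=
    mem_Ico.mpr ⟨Fin.pos_iff_ne_zero.mpr hz, z.is_lt⟩
  have hsum : sin (π * (x : ℕ) / q + π * (y : ℕ) / q) ≠ 0 := by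
    rw [← add_div, ← mul_add, ← Nat.cast_add]
    refine sin_pi_mul_div_ne_zero (Nat.pos_of_neZero q) fun h => hxy (Fin.ext ?_)
    simpa [Fin.val_add] using Nat.mod_eq_zero_of_dvd h
  rw [Fin.val_add, cot_pi_mul_natCast_mod, Nat.cast_add, mul_add π, add_div]
  exact cot_mul_cot_sub_cot_add_mul (sin_pi_mul_div_ne_zero_of_mem_Ico (hmem hx))
    (sin_pi_mul_div_ne_zero_of_mem_Ico (hmem hy)) hsum

end Fin

theorem sum_Ico_one_eq_sum_fin {M : Type*} [AddCommMonoid M] {f : ℕ → M} (hf : f 0 = 0)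
    (q : ℕ) : ∑ j ∈ Ico 1 q, f j = ∑ x : Fin q, f x := by
  rcases Nat.eq_zero_or_pos q with rfl | hq
  · simp
  rw [Fin.sum_univ_eq_sum_range, sum_range_eq_add_Ico _ hq, hf, zero_add]

-- `cot 0 = 0` in Lean (`sin 0 = 0` and `x / 0 = 0`), so the `j = 0` term can be added for free.
theorem sum_cot_pi_mul_div (q : ℕ) : ∑ j ∈ Ico 1 q, cot (π * j / q) = 0 := by
  rcases Nat.eq_zero_or_pos q with rfl | hq
  · simp
  have : NeZero q := ⟨hq.ne'⟩
  rw [sum_Ico_one_eq_sum_fin (f := fun j : ℕ => cot (π * j / q)) (by simp [cot_eq_cos_div_sin])]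
  exact Fintype.sum_eq_zero_of_odd Fin.cot_pi_mul_neg

theorem sum_cot_sq_pi_mul_div {q : ℕ} (hq : 0 < q) :
    ∑ j ∈ Ico 1 q, cot (π * j / q) ^ 2 = (q - 1) * (q - 2) / 3 := by
  have : NeZero q := ⟨hq.ne'⟩
  rw [sum_Ico_one_eq_sum_fin (f := fun j : ℕ => cot (π * j / q) ^ 2)
    (by simp [cot_eq_cos_div_sin])]
  have := three_mul_sum_sq_of_cot_addition (c := fun x : Fin q => cot (π * (x : ℕ) / q))
    Fin.cot_pi_mul_neg fun x y hx hy hxy => Fin.cot_pi_mul_add x y hx hy hxy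
  rw [Fintype.card_fin] at this
  linear_combination this / 3

theorem IsPrimitiveRoot.mul_pow_pow {M : Type*} [CommMonoid M] {ζ : M} {p : ℕ}
    (hζ : IsPrimitiveRoot ζ p) (w : M) (k : ℕ) : (w * ζ ^ k) ^ p = w ^ p := by
  rw [mul_pow, ← pow_mul, mul_comm k, pow_mul, hζ.pow_eq_one, one_pow, mul_one]

theorem IsPrimitiveRoot.sum_inv_mul_pow_sub_one {K : Type*} [Field K] {ζ : K} {p : ℕ}
    (hζ : IsPrimitiveRoot ζ p) {w : K} (hw : w ^ p ≠ 1) :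
    ∑ k ∈ range p, (w * ζ ^ k - 1)⁻¹ = p * (w ^ p - 1)⁻¹ := by
  have hgeom (k : ℕ) :
      (w * ζ ^ k - 1)⁻¹ = (∑ m ∈ range p, (w * ζ ^ k) ^ m) * (w ^ p - 1)⁻¹ := by
    have hu : w * ζ ^ k - 1 ≠ 0 :=
      sub_ne_zero.mpr fun h => hw (by rw [← hζ.mul_pow_pow w k, h, one_pow])
    have hw' : w ^ p - 1 ≠ 0 := sub_ne_zero.mpr hw
    field_simp
    rw [mul_geom_sum, hζ.mul_pow_pow]
  have horth (m : ℕ) (hm : m ∈ range p) :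
      ∑ k ∈ range p, (w * ζ ^ k) ^ m = if m = 0 then (p : K) else 0 := by
    split_ifs with h
    · simp [h]
    have hζm : ζ ^ m ≠ 1 := hζ.pow_ne_one_of_pos_of_lt h (mem_range.mp hm)
    simp_rw [mul_pow, ← mul_sum, ← pow_mul, mul_comm _ m, pow_mul]
    rw [geom_sum_eq hζm, ← pow_mul, mul_comm m, pow_mul, hζ.pow_eq_one, one_pow, sub_self,
      zero_div, mul_zero]
  simp_rw [hgeom, ← sum_mul]
  rw [sum_comm, sum_congr rfl horth, sum_ite_eq']
  split_ifs with h
  · rfl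
  · obtain rfl : p = 0 := by simpa using h
    simp

namespace Complex

theorem exp_two_mul_I_mul_eq_one_iff (z : ℂ) : exp (2 * I * z) = 1 ↔ sin z = 0 := by
  rw [exp_eq_one_iff, sin_eq_zero_iff]
  refine exists_congr fun n => ⟨fun h => ?_, fun h => by rw [h]; ring⟩
  have : (2 * I) * z = (2 * I) * (n * π) := by rw [h]; ring
  exact mul_left_cancel₀ (by simp) this

theorem cot_eq_I_add_inv {z : ℂ} (hz : exp (2 * I * z) ≠ 1) :
    cot z = I + 2 * I * (exp (2 * I * z) - 1)⁻¹ := by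
  have h : exp (2 * I * z) - 1 ≠ 0 := sub_ne_zero.mpr hz
  have h' : 1 - exp (2 * I * z) ≠ 0 := sub_ne_zero.mpr (Ne.symm hz)
  rw [cot_eq_exp_ratio]
  field_simp
  linear_combination (exp (2 * I * z) ^ 2 - 1) * I_sq

theorem sum_cot_add_pi_mul_div {p : ℕ} (hp : 0 < p) {z : ℂ} (hz : sin (p * z) ≠ 0) :
    ∑ k ∈ range p, cot (z + π * k / p) = p * cot (p * z) := by
  have hζ := isPrimitiveRoot_exp p hp.ne'
  set w := exp (2 * I * z)
  have hw : w ^ p = exp (2 * I * (p * z)) := by rw [← exp_nat_mul]; ring_nf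
  have hwp : w ^ p ≠ 1 := by rwa [hw, Ne, exp_two_mul_I_mul_eq_one_iff]
  have hexp (k : ℕ) : exp (2 * I * (z + π * k / p)) = w * exp (2 * π * I / p) ^ k := by
    rw [← exp_nat_mul, ← exp_add]
    ring_nf
  have hcot (k : ℕ) :
      cot (z + π * k / p) = I + 2 * I * (w * exp (2 * π * I / p) ^ k - 1)⁻¹ := by
    have hne : w * exp (2 * π * I / p) ^ k ≠ 1 :=
      fun h => hwp (by rw [← hζ.mul_pow_pow w k, h, one_pow])
    rw [cot_eq_I_add_inv (by rwa [hexp]), hexp]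
  simp_rw [hcot, sum_add_distrib, ← mul_sum, hζ.sum_inv_mul_pow_sub_one hwp, sum_const,
    card_range, cot_eq_I_add_inv (hw ▸ hwp), ← hw, nsmul_eq_mul]
  ring

end Complex

theorem Real.sum_cot_add_pi_mul_div {p : ℕ} (hp : 0 < p) {θ : ℝ} (hθ : sin (p * θ) ≠ 0) :
    ∑ k ∈ range p, cot (θ + π * k / p) = p * cot (p * θ) := by
  apply Complex.ofReal_injective
  push_cast [Complex.ofReal_cot]
  exact Complex.sum_cot_add_pi_mul_div hp (by exact_mod_cast hθ)

theorem sum_sum_cot_add_mul_cot {p q : ℕ} (hp : 0 < p) (hq : 0 < q) (hpq : p.Coprime q) :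
    ∑ j ∈ Ico 1 q, ∑ k ∈ Ico 1 p, cot (π * j / q + π * k / p) * cot (π * j / q)
      = 4 * p * q * dedekindSum p q - (q - 1) * (q - 2) / 3 := by
  have hinner (j : ℕ) (hj : j ∈ Ico 1 q) : ∑ k ∈ Ico 1 p, cot (π * j / q + π * k / p)
      = p * cot (π * p * j / q) - cot (π * j / q) := by
    obtain ⟨hj1, hjq⟩ := mem_Ico.mp hj
    have hsin : sin (p * (π * j / q)) ≠ 0 := by
      rw [show p * (π * j / q) = π * ↑(p * j) / q by push_cast; ring]
      exact sin_pi_mul_div_ne_zero hq fun h =>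
        Nat.not_dvd_of_pos_of_lt hj1 hjq (hpq.symm.dvd_of_dvd_mul_left h)
    have hmul := sum_cot_add_pi_mul_div hp hsin
    rw [sum_range_eq_add_Ico _ hp, Nat.cast_zero, mul_zero, zero_div, add_zero] at hmul
    rw [show π * p * j / q = p * (π * j / q) by ring]
    linarith
  have hq' : (q : ℝ) ≠ 0 := by positivity
  calc ∑ j ∈ Ico 1 q, ∑ k ∈ Ico 1 p, cot (π * j / q + π * k / p) * cot (π * j / q)
      = ∑ j ∈ Ico 1 q, (p * (cot (π * j / q) * cot (π * p * j / q)) - cot (π * j / q) ^ 2) :=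
        sum_congr rfl fun j hj => by rw [← sum_mul, hinner j hj]; ring
    _ = 4 * p * q * dedekindSum p q - (q - 1) * (q - 2) / 3 := by
        rw [sum_sub_distrib, ← mul_sum, sum_cot_sq_pi_mul_div hq, dedekindSum]
        field_simp

/-- Dedekind reciprocity: for coprime positive integers `p, q`,
`s(p,q) + s(q,p) = (p² + q² + 1)/(12pq) - 1/4`. -/
theorem dedekind_reciprocity (p q : ℕ) (hp : 0 < p) (hq : 0 < q)
    (hpq : Nat.Coprime p q) :
    dedekindSum p q + dedekindSum q p =
      ((p : ℝ) ^ 2 + (q : ℝ) ^ 2 + 1) / (12 * p * q) - 1 / 4 := by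
  have hsum : ∑ j ∈ Ico 1 q, ∑ k ∈ Ico 1 p, (cot (π * j / q) * cot (π * k / p)
      - cot (π * j / q + π * k / p) * (cot (π * j / q) + cot (π * k / p)))
      = (q - 1) * (p - 1) := by
    rw [sum_congr rfl fun j hj => sum_congr rfl fun k hk => cot_mul_cot_sub_cot_add_mul
      (sin_pi_mul_div_ne_zero_of_mem_Ico hj) (sin_pi_mul_div_ne_zero_of_mem_Ico hk)
      (sin_pi_mul_div_add_ne_zero hpq hj hk)]
    simp [Nat.cast_sub hp, Nat.cast_sub hq]
    ring
  have hprod : ∑ j ∈ Ico 1 q, ∑ k ∈ Ico 1 p, cot (π * j / q) * cot (π * k / p) = 0 := by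
    rw [← sum_mul_sum, sum_cot_pi_mul_div, zero_mul]
  have hleft := sum_sum_cot_add_mul_cot hp hq hpq
  have hright :
      ∑ j ∈ Ico 1 q, ∑ k ∈ Ico 1 p, cot (π * j / q + π * k / p) * cot (π * k / p) =
        4 * q * p * dedekindSum q p - (p - 1) * (p - 2) / 3 := by
    rw [sum_comm, ← sum_sum_cot_add_mul_cot hq hp hpq.symm]
    exact sum_congr rfl fun k _ => sum_congr rfl fun j _ => by rw [add_comm]
  simp only [mul_add, sum_sub_distrib, sum_add_distrib, hprod, hleft, hright] at hsum
  have hp' : (p : ℝ) ≠ 0 := by positivity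
  have hq' : (q : ℝ) ≠ 0 := by positivity
  field_simp
  linear_combination -12 * hsum
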